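/- arXiv:1611.09950 — 4 statements merged into one kernel-verified Lean document; each statement's English description precedes it below -/
import Mathlib

section
/- The function θ(λ) = 2(1-e^{-4λL})² / ((1+e^{-2λL})⁴ + (1-e^{-2λL})⁴) is strictly monotone increasing on (0,∞), equals 0 at λ = 0, and tends to 1 as λ → ∞. -/
/-! Writing `t = e^{-2λL}`, numerator and denominator of `θ` divided by `4t²` become
`cosh(4λL) - 1` and `cosh(4λL) + 3`, so `θ(λ) = 1 - 4 / (cosh(4λL) + 3)`. All three claims
follow from `cosh` being strictly increasing on `[0, ∞)`, equal to `1` at `0` and unbounded. -/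

open Real Filter Set

lemma tendsto_cosh_atTop : Tendsto cosh atTop atTop :=
  tendsto_atTop_mono (fun x => by rw [cosh_eq]; linarith [exp_pos (-x)])
    (tendsto_exp_atTop.atTop_div_const two_pos)

lemma two_mul_one_sub_exp_sq_div_eq (x : ℝ) :
    2 * (1 - exp (-2 * x)) ^ 2 / ((1 + exp (-x)) ^ 4 + (1 - exp (-x)) ^ 4) =
      1 - 4 / (cosh (2 * x) + 3) := by
  have ht : exp (-x) ≠ 0 := (exp_pos _).ne'
  have h_neg : exp (-2 * x) = exp (-x) ^ 2 := by rw [← exp_nat_mul]; ring_nf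
  have h_pos : exp (2 * x) = (exp (-x) ^ 2)⁻¹ := by rw [← h_neg, ← exp_neg]; ring_nf
  rw [cosh_eq, neg_mul_eq_neg_mul, h_neg, h_pos]
  field_simp
  ring

lemma strictMonoOn_one_sub_four_div_cosh_add_three :
    StrictMonoOn (fun x => 1 - 4 / (cosh x + 3)) (Ici 0) := by
  intro x hx y hy hxy
  have hcosh := cosh_strictMonoOn hx hy hxy
  have hx3 : 0 < cosh x + 3 := by positivity
  dsimp only
  gcongr

lemma tendsto_one_sub_four_div_cosh_add_three :
    Tendsto (fun x => 1 - 4 / (cosh x + 3)) atTop (nhds 1) := by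
  have h := (tendsto_cosh_atTop.atTop_add (tendsto_const_nhds (x := (3 : ℝ)))).const_div_atTop 4
  simpa using h.const_sub 1

/-- θ(λ) = 2(1-e^{-4λL})² / ((1+e^{-2λL})⁴ + (1-e^{-2λL})⁴) is strictly increasing
on (0,∞), equals 0 at λ = 0, and tends to 1 as λ → ∞. -/
theorem theta_monotone (L : ℝ) (hL : 0 < L) :
    let θ : ℝ → ℝ := fun lam =>
      2 * (1 - exp (-4 * lam * L)) ^ 2 /
        ((1 + exp (-2 * lam * L)) ^ 4 + (1 - exp (-2 * lam * L)) ^ 4)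
    StrictMonoOn θ (Set.Ioi (0 : ℝ)) ∧ θ 0 = 0 ∧ Tendsto θ atTop (nhds 1) := by
  intro θ
  have hθ : θ = (fun x => 1 - 4 / (cosh x + 3)) ∘ fun lam => 4 * L * lam := by
    funext lam
    simp only [θ, Function.comp_apply]
    rw [show -4 * lam * L = -2 * (2 * L * lam) by ring, show -2 * lam * L = -(2 * L * lam) by ring,
      show 4 * L * lam = 2 * (2 * L * lam) by ring]
    exact two_mul_one_sub_exp_sq_div_eq _
  have hscale : StrictMono fun lam : ℝ => 4 * L * lam := strictMono_mul_left_of_pos (by positivity)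
  rw [hθ]
  refine ⟨?_, by norm_num, ?_⟩
  · exact strictMonoOn_one_sub_four_div_cosh_add_three.comp (hscale.strictMonoOn _)
      fun lam (hlam : 0 < lam) => (mul_pos (by positivity) hlam).le
  · exact tendsto_one_sub_four_div_cosh_add_three.comp (tendsto_id.const_mul_atTop (by positivity))
end

section
/- For every t > 0, with y(t) = 2(1-e^{-2t})² / ((1+e^{-t})⁴ + (1-e^{-t})⁴), the inequality (t²/2)·(1-y(t))·(1/y(t) - y(t)) < 1 holds. -/
/-!
With `s = sinh t` one has `y(t) = s² / (s² + 2)`, and then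
`(t²/2)(1 - y)(1/y - y) = 4 t² (s² + 1) / (s² (s² + 2)²)`.
This is `< 1` because `t < sinh t` for `t > 0` and `4 (s² + 1) ≤ (s² + 2)²`.
-/

open Real

lemma two_mul_one_sub_exp_sq_div_eq_sinh (t : ℝ) :
    2 * (1 - exp (-2 * t)) ^ 2 / ((1 + exp (-t)) ^ 4 + (1 - exp (-t)) ^ 4) =
      sinh t ^ 2 / (sinh t ^ 2 + 2) := by
  have hx : 0 < exp (-t) := exp_pos _
  rw [sinh_eq, show -2 * t = -t + -t by ring, exp_add,
    show exp t = (exp (-t))⁻¹ by rw [exp_neg, inv_inv]]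
  field_simp
  ring

lemma one_sub_div_add_two_mul_one_div_sub {u : ℝ} (hu : u ≠ 0) (hu2 : u + 2 ≠ 0) :
    (1 - u / (u + 2)) * (1 / (u / (u + 2)) - u / (u + 2)) =
      8 * (u + 1) / (u * (u + 2) ^ 2) := by
  field_simp
  ring

lemma sq_div_two_mul_one_sub_mul_one_div_sub_lt_one {a u : ℝ} (hu : 0 < u) (hau : a ^ 2 < u) :
    a ^ 2 / 2 * (1 - u / (u + 2)) * (1 / (u / (u + 2)) - u / (u + 2)) < 1 := by
  rw [mul_assoc, one_sub_div_add_two_mul_one_div_sub hu.ne' (by positivity), ← mul_div_assoc,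
    div_lt_one (by positivity)]
  calc a ^ 2 / 2 * (8 * (u + 1)) < u / 2 * (8 * (u + 1)) := by gcongr
    _ ≤ u * (u + 2) ^ 2 := by nlinarith [pow_pos hu 3]

/-- For every t > 0, with y(t) = 2(1-e^{-2t})²/((1+e^{-t})⁴+(1-e^{-t})⁴),
we have (t²/2)(1 - y(t))(1/y(t) - y(t)) < 1. -/
theorem y_inequality (t : ℝ) (ht : 0 < t) :
    let y : ℝ := 2 * (1 - exp (-2 * t)) ^ 2 /
      ((1 + exp (-t)) ^ 4 + (1 - exp (-t)) ^ 4)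
    t ^ 2 / 2 * (1 - y) * (1 / y - y) < 1 := by
  intro y
  rw [show y = sinh t ^ 2 / (sinh t ^ 2 + 2) from two_mul_one_sub_exp_sq_div_eq_sinh t]
  have ht_lt_sinh : t < sinh t := self_lt_sinh_iff.mpr ht
  exact sq_div_two_mul_one_sub_mul_one_div_sub_lt_one (by positivity)
    (pow_lt_pow_left₀ ht_lt_sinh ht.le two_ne_zero)
end

section
/- For the infinite-allele model on the balanced quartet, d_KL(P₀, P_ε) ≥ ζ·e^{-4λL}, where ζ = 1 - e^{-λε}. -/
/-!
Writing `P_ε = (1 - ζ) P₀ + ζ D`, every summand of `d_KL(P₀, P_ε)` is `-P₀ᵢ log (1 - xᵢ)` with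
`P₀ᵢ xᵢ = ζ (P₀ᵢ - Dᵢ)` and `xᵢ < 1`, so `-log (1 - x) ≥ x` bounds it below by `ζ (P₀ᵢ - Dᵢ)`.
Summing, the divergence is at least `ζ` times the mass lost by `D`, and on the balanced quartet
that is `1 - (1 - e^{-4λL}) = e^{-4λL}`.
-/

open Real Finset

lemma mul_le_neg_mul_log_one_sub {p x : ℝ} (hp : 0 ≤ p) (hx : x < 1) :
    p * x ≤ -(p * log (1 - x)) := by
  have hlog : log (1 - x) ≤ -x := by
    linarith [log_le_sub_one_of_pos (sub_pos.mpr hx)]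
  linarith [mul_le_mul_of_nonneg_left hlog hp]

lemma mul_sub_le_neg_mul_log_one_sub_mul_div {p d ζ : ℝ} (hp : 0 < p) (hd : 0 ≤ d)
    (hζ0 : 0 ≤ ζ) (hζ1 : ζ < 1) :
    ζ * (p - d) ≤ -(p * log (1 - ζ * ((p - d) / p))) := by
  have hmass : p * (ζ * ((p - d) / p)) = ζ * (p - d) := by field_simp
  have hlt : ζ * ((p - d) / p) < 1 := by
    have hrest : 1 - ζ * ((p - d) / p) = (1 - ζ) + ζ * (d / p) := by field_simp; ring
    have : 0 ≤ ζ * (d / p) := by positivity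
    linarith
  rw [← hmass]
  exact mul_le_neg_mul_log_one_sub hp.le hlt

lemma mul_sum_sub_le_neg_sum_mul_log_one_sub_mul_div {ι : Type*} (s : Finset ι) {p d : ι → ℝ}
    {ζ : ℝ} (hp : ∀ i ∈ s, 0 < p i) (hd : ∀ i ∈ s, 0 ≤ d i) (hζ0 : 0 ≤ ζ) (hζ1 : ζ < 1) :
    ζ * ∑ i ∈ s, (p i - d i) ≤ -∑ i ∈ s, p i * log (1 - ζ * ((p i - d i) / p i)) := by
  rw [mul_sum, ← sum_neg_distrib]
  exact sum_le_sum fun i hi =>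
    mul_sub_le_neg_mul_log_one_sub_mul_div (hp i hi) (hd i hi) hζ0 hζ1

/-- For the infinite-allele model on the balanced quartet,
d_KL(P₀, P_ε) ≥ ζ e^{-4λL}, where ζ = 1 - e^{-λε}. -/
theorem kl_lower_bound (L lam ε : ℝ) (hL : 0 < L) (hlam : 0 < lam) (hε : 0 < ε) :
    let y : ℝ := 1 - exp (-lam * L)
    let ζ : ℝ := 1 - exp (-lam * ε)
    let P1 : ℝ := (1 - y) ^ 4
    let P2 : ℝ := 4 * y * (1 - y) ^ 3
    let P3 : ℝ := 4 * y ^ 2 * (1 - y) ^ 2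
    let P4 : ℝ := 2 * y ^ 2 * (1 - y) ^ 2
    let P5 : ℝ := 4 * y ^ 3 * (1 - y) + y ^ 4
    let D4 : ℝ := 2 * exp (-2 * lam * L) * (1 - exp (-2 * lam * L))
    let D5 : ℝ := (1 - exp (-2 * lam * L)) ^ 2
    ζ * exp (-4 * lam * L) ≤
      -(P1 * log (1 - ζ * ((P1 - 0) / P1)) + P2 * log (1 - ζ * ((P2 - 0) / P2)) +
        P3 * log (1 - ζ * ((P3 - 0) / P3)) + P4 * log (1 - ζ * ((P4 - D4) / P4)) +
        P5 * log (1 - ζ * ((P5 - D5) / P5))) := by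
  intro y ζ P1 P2 P3 P4 P5 D4 D5
  set u := exp (-lam * L) with hu
  have hu0 : 0 < u := exp_pos _
  have hu1 : u < 1 := exp_lt_one_iff.mpr (by nlinarith)
  have hζ0 : 0 ≤ ζ := sub_nonneg.mpr (exp_le_one_iff.mpr (by nlinarith))
  have hζ1 : ζ < 1 := sub_lt_self 1 (exp_pos _)
  have hexp2 : exp (-2 * lam * L) = u ^ 2 := by rw [hu, ← exp_nat_mul]; ring_nf
  have hexp4 : exp (-4 * lam * L) = u ^ 4 := by rw [hu, ← exp_nat_mul]; ring_nf
  have hy : 1 - y = u := sub_sub_cancel 1 u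
  have hy0 : 0 < y := sub_pos.mpr hu1
  have hP : ∀ i ∈ univ, 0 < ![P1, P2, P3, P4, P5] i := by
    intro i _
    fin_cases i <;> simp only [Fin.zero_eta, Fin.mk_one, Fin.reduceFinMk, Matrix.cons_val] <;>
      simp only [P1, P2, P3, P4, P5, hy]
    exacts [by bound, by bound, by bound, by bound, add_pos (by bound) (by bound)]
  have hD : ∀ i ∈ univ, 0 ≤ ![0, 0, 0, D4, D5] i := by
    intro i _
    fin_cases i <;> simp only [Fin.zero_eta, Fin.mk_one, Fin.reduceFinMk, Matrix.cons_val] <;>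
      simp only [D4, D5, hexp2, le_refl] <;> bound
  have hsum : ∑ i, (![P1, P2, P3, P4, P5] i - ![0, 0, 0, D4, D5] i) = exp (-4 * lam * L) := by
    simp only [Fin.sum_univ_five, Matrix.cons_val, P1, P2, P3, P4, P5, D4, D5, hexp2, hexp4, hy]
    ring
  simpa only [Fin.sum_univ_five, Matrix.cons_val, hsum] using
    mul_sum_sub_le_neg_sum_mul_log_one_sub_mul_div univ hP hD hζ0 hζ1
end

section
/- For 0 < ε < L/3 and λ > 0, with ζ = 1 - e^{-λε}, the bounds |ζ·b₄| < 2/3 and |ζ·b₅| < 1 hold, where b₄ = -2e^{-λL}/(1 - e^{-λL}) and b₅ = -4e^{-2λL}/((1 - e^{-λL})(1 + 3e^{-λL})). -/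
/-!
Write `q = e^{-λL} = x³` with `x = e^{-λL/3}`. Since `ε < L/3`, `ζ ≤ 1 - x`, so
`|ζ b₄| ≤ 2 (1 - x) x³ / (1 - x³) = 2 x³ / (1 + x + x²) < 2/3`.
Moreover `b₅ = b₄ · 2q / (1 + 3q)` with `0 ≤ 2q / (1 + 3q) ≤ 1`, so `|ζ b₅| ≤ |ζ b₄|`.
-/

open Real

lemma one_sub_mul_pow_three_div_one_sub_pow_three_lt {x : ℝ} (hx0 : 0 ≤ x) (hx1 : x < 1) :
    (1 - x) * x ^ 3 / (1 - x ^ 3) < 1 / 3 := by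
  have hx3 : 0 < 1 - x ^ 3 := sub_pos.2 (pow_lt_one₀ hx0 hx1 (by norm_num))
  rw [div_lt_iff₀ hx3]
  nlinarith [mul_pos (sub_pos.2 hx1) (sub_pos.2 hx1), mul_nonneg hx0 (sub_pos.2 hx1).le,
    mul_nonneg (mul_nonneg hx0 hx0) (sub_pos.2 hx1).le]

lemma one_sub_exp_neg_mul_exp_neg_div_lt {s t : ℝ} (ht : 0 < t) (hst : s ≤ t / 3) :
    (1 - exp (-s)) * (exp (-t) / (1 - exp (-t))) < 1 / 3 := by
  set x := exp (-(t / 3))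
  have hx0 : 0 < x := exp_pos _
  have hx1 : x < 1 := exp_lt_one_iff.2 (by linarith)
  have hcube : exp (-t) = x ^ 3 := by rw [← exp_nat_mul]; ring_nf
  have hsx : 1 - exp (-s) ≤ 1 - x := sub_le_sub_left (exp_le_exp.2 (by linarith)) 1
  have hfactor : 0 ≤ x ^ 3 / (1 - x ^ 3) :=
    div_nonneg (by positivity) (sub_pos.2 (pow_lt_one₀ hx0.le hx1 (by norm_num))).le
  calc (1 - exp (-s)) * (exp (-t) / (1 - exp (-t)))
      ≤ (1 - x) * (x ^ 3 / (1 - x ^ 3)) := by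
        rw [hcube]; exact mul_le_mul_of_nonneg_right hsx hfactor
    _ = (1 - x) * x ^ 3 / (1 - x ^ 3) := by ring
    _ < 1 / 3 := one_sub_mul_pow_three_div_one_sub_pow_three_lt hx0.le hx1

lemma abs_two_mul_div_one_add_three_mul_le_one {q : ℝ} (hq : 0 ≤ q) :
    |2 * q / (1 + 3 * q)| ≤ 1 := by
  have h : 0 < 1 + 3 * q := by linarith
  rw [abs_of_nonneg (by positivity), div_le_one h]
  linarith

/-- For 0 < ε < L/3 and λ > 0, with ζ = 1 - e^{-λε},
|ζ b₄| < 2/3 and |ζ b₅| < 1. -/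
theorem zeta_b_bounds (L ε lam : ℝ) (hL : 0 < L) (hε : 0 < ε) (hεL : ε < L / 3)
    (hlam : 0 < lam) :
    let ζ : ℝ := 1 - exp (-lam * ε)
    let b₄ : ℝ := -2 * exp (-lam * L) / (1 - exp (-lam * L))
    let b₅ : ℝ := -4 * exp (-2 * lam * L) / ((1 - exp (-lam * L)) * (1 + 3 * exp (-lam * L)))
    |ζ * b₄| < 2 / 3 ∧ |ζ * b₅| < 1 := by
  intro ζ b₄ b₅
  set q := exp (-lam * L) with hq
  have hζ : 0 ≤ ζ := sub_nonneg.2 (exp_le_one_iff.2 (by nlinarith))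
  have hq1 : q < 1 := exp_lt_one_iff.2 (by nlinarith)
  have hb₄ : |ζ * b₄| < 2 / 3 := by
    have hkey := one_sub_exp_neg_mul_exp_neg_div_lt (mul_pos hlam hL)
      (show lam * ε ≤ lam * L / 3 by nlinarith)
    have hnonneg : 0 ≤ ζ * (q / (1 - q)) :=
      mul_nonneg hζ (div_nonneg (exp_pos _).le (sub_pos.2 hq1).le)
    have hb₄_eq : ζ * b₄ = -(2 * (ζ * (q / (1 - q)))) := by ring
    rw [hb₄_eq, abs_neg, abs_of_nonneg (by positivity)]
    simp only [ζ, hq, neg_mul] at hkey ⊢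
    linarith
  have hb₅_eq : ζ * b₅ = ζ * b₄ * (2 * q / (1 + 3 * q)) := by
    have hsq : exp (-2 * lam * L) = q ^ 2 := by rw [hq, ← exp_nat_mul]; ring_nf
    have h1 : 1 - q ≠ 0 := (sub_pos.2 hq1).ne'
    have h2 : 1 + 3 * q ≠ 0 := by positivity
    simp only [b₄, b₅, hsq, ← hq]
    field_simp
    ring
  refine ⟨hb₄, ?_⟩
  rw [hb₅_eq, abs_mul]
  calc |ζ * b₄| * |2 * q / (1 + 3 * q)| ≤ |ζ * b₄| :=
        mul_le_of_le_one_right (abs_nonneg _) (abs_two_mul_div_one_add_three_mul_le_one (exp_pos _).le)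
    _ < 1 := by linarith
end
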